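/- arXiv:2511.05281 — 3 statements merged into one kernel-verified Lean document; each statement's English description precedes it below -/
import Mathlib

section
/- Let V_0, V_1, …, V_M be random variables taking values in a common measurable space 𝒳, let T : 𝒳 → ℝ be any measurable function, and define pval = (1 + #{m ∈ {1, …, M} : T(V_m) ≥ T(V_0)})/(M + 1). Then for every α ∈ [0, 1], P(pval ≤ α) ≤ α + d_exch(V_0, V_1, …, V_M). -/
open MeasureTheory ProbabilityTheory ENNReal

open scoped Classical

noncomputable section

/-- The total variation distance `d_TV(P, Q) = sup_A |P(A) - Q(A)|` between two measures. -/
def tvDist {Ω : Type*} [MeasurableSpace Ω] (P Q : Measure Ω) : ℝ≥0∞ :=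
  ⨆ (s : Set Ω) (_ : MeasurableSet s), (P s - Q s) ⊔ (Q s - P s)

/-- The chi-squared divergence `χ²(Q ‖ P) = ∫ (dQ/dP - 1)² dP` if `Q ≪ P`, and `∞` otherwise. -/
def chiSq {Ω : Type*} [MeasurableSpace Ω] (Q P : Measure Ω) : ℝ≥0∞ :=
  if Q ≪ P then ∫⁻ ω, ((Q.rnDeriv P ω - 1) ⊔ (1 - Q.rnDeriv P ω)) ^ 2 ∂P else ⊤

/-- A measure on `Fin n → 𝒳` is exchangeable if it is invariant under every permutation of the
coordinates. -/
def Exchangeable {𝒳 : Type*} [MeasurableSpace 𝒳] {n : ℕ} (Q : Measure (Fin n → 𝒳)) : Prop :=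
  ∀ σ : Equiv.Perm (Fin n), Measure.map (fun v => v ∘ σ) Q = Q

/-- The distance to exchangeability: the infimum, over exchangeable probability measures `Q`,
of the total variation distance to `Q`. -/
def dExch {𝒳 : Type*} [MeasurableSpace 𝒳] {n : ℕ} (P : Measure (Fin n → 𝒳)) : ℝ≥0∞ :=
  ⨅ (Q : Measure (Fin n → 𝒳)) (_ : IsProbabilityMeasure Q) (_ : Exchangeable Q), tvDist P Q

/-- The p-value `(1 + #{m : T(v (m+1)) ≥ T(v 0)}) / (M + 1)`, where `v 0` is the data and
`v 1, …, v M` are the copies. -/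
def pval {𝒳 : Type*} {M : ℕ} (T : 𝒳 → ℝ) (v : Fin (M + 1) → 𝒳) : ℝ :=
  (1 + ((Finset.univ.filter fun m : Fin M => T (v 0) ≤ T (v m.succ)).card : ℝ)) / (M + 1)

/-! Under an exchangeable law the score `T (V 0)` is equally likely to sit at any rank among
`T (V 0), …, T (V M)`, while for every fixed sample at most `k` indices `i` have at most `k`
scores `≥ T (V i)`. Averaging over `i` gives `Q (pval ≤ α) ≤ α` for exchangeable `Q`, and a
total variation perturbation of `Q` moves this probability by at most `d_TV(P, Q)`. -/

open Finset

section NumAtLeast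

variable {ι α : Type*} [Fintype ι] [LinearOrder α]

def numAtLeast (f : ι → α) (i : ι) : ℕ := #{j | f i ≤ f j}

theorem card_numAtLeast_le (f : ι → α) (k : ℕ) : #{i | numAtLeast f i ≤ k} ≤ k := by
  obtain hS | hS := (univ.filter fun i => numAtLeast f i ≤ k).eq_empty_or_nonempty
  · simp [hS]
  -- Every member of the set scores at least as high as its lowest-scoring member `i`.
  obtain ⟨i, hi, hmin⟩ := exists_min_image _ f hS
  calc #{i | numAtLeast f i ≤ k} ≤ numAtLeast f i :=
        card_le_card fun j hj => mem_filter.mpr ⟨mem_univ j, hmin j hj⟩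
    _ ≤ k := (mem_filter.mp hi).2

theorem numAtLeast_comp_perm (f : ι → α) (σ : Equiv.Perm ι) (i : ι) :
    numAtLeast (f ∘ σ) i = numAtLeast f (σ i) := by
  simp only [numAtLeast, card_filter, Function.comp_apply]
  exact Equiv.sum_comp σ fun j => if f (σ i) ≤ f j then 1 else 0

end NumAtLeast

theorem measure_le_add_tvDist {Ω : Type*} [MeasurableSpace Ω] (P Q : Measure Ω) {s : Set Ω}
    (hs : MeasurableSet s) : P s ≤ Q s + tvDist P Q := by
  rw [← tsub_le_iff_left]
  exact le_sup_left.trans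
    (le_iSup₂ (f := fun s (_ : MeasurableSet s) => (P s - Q s) ⊔ (Q s - P s)) s hs)

theorem measure_le_add_dExch {𝒳 : Type*} [MeasurableSpace 𝒳] {n : ℕ} (P : Measure (Fin n → 𝒳))
    {s : Set (Fin n → 𝒳)} (hs : MeasurableSet s) {c : ℝ≥0∞}
    (h : ∀ Q : Measure (Fin n → 𝒳), IsProbabilityMeasure Q → Exchangeable Q → Q s ≤ c) :
    P s ≤ c + dExch P := by
  rw [← tsub_le_iff_left]
  refine le_iInf₂ fun Q hQ => le_iInf fun hexch => tsub_le_iff_left.mpr ?_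
  exact (measure_le_add_tvDist P Q hs).trans (add_le_add_left (h Q hQ hexch) _)

theorem sum_measure_le_of_card_mem_le {Ω ι : Type*} [MeasurableSpace Ω] [Fintype ι]
    (μ : Measure Ω) {s : ι → Set Ω} (hs : ∀ i, MeasurableSet (s i)) {k : ℕ}
    (hk : ∀ x, #{i | x ∈ s i} ≤ k) : ∑ i, μ (s i) ≤ k * μ Set.univ := by
  calc ∑ i, μ (s i) = ∫⁻ x, ∑ i, (s i).indicator 1 x ∂μ := by
        rw [lintegral_finsetSum _ fun i _ => measurable_one.indicator (hs i)]
        simp_rw [lintegral_indicator_one (hs _)]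
    _ ≤ ∫⁻ _, (k : ℝ≥0∞) ∂μ := lintegral_mono fun x => by
        simpa [Set.indicator_apply, ← Finset.sum_filter] using
          (Nat.cast_le (α := ℝ≥0∞)).mpr (hk x)
    _ = k * μ Set.univ := lintegral_const _

section Exchangeable

variable {𝒳 : Type*} [MeasurableSpace 𝒳] {n : ℕ} {Q : Measure (Fin n → 𝒳)}

theorem Exchangeable.measure_preimage_comp_perm (hQ : Exchangeable Q) (σ : Equiv.Perm (Fin n))
    {s : Set (Fin n → 𝒳)} (hs : MeasurableSet s) : Q ((fun v => v ∘ σ) ⁻¹' s) = Q s := by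
  have hσ : Measurable fun v : Fin n → 𝒳 => v ∘ σ :=
    measurable_pi_lambda _ fun i => measurable_pi_apply (σ i)
  rw [← Measure.map_apply hσ hs, hQ σ]

theorem measurableSet_numAtLeast_le {T : 𝒳 → ℝ} (hT : Measurable T) (i : Fin n) (k : ℕ) :
    MeasurableSet {v : Fin n → 𝒳 | numAtLeast (T ∘ v) i ≤ k} := by
  have : Measurable fun v : Fin n → 𝒳 => numAtLeast (T ∘ v) i := by
    simp only [numAtLeast, card_filter, Function.comp_apply]
    exact Finset.measurable_sum _ fun j _ => Measurable.ite
      (measurableSet_le (hT.comp (measurable_pi_apply i)) (hT.comp (measurable_pi_apply j)))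
      measurable_const measurable_const
  exact this measurableSet_Iic

theorem Exchangeable.mul_measure_numAtLeast_le [IsProbabilityMeasure Q] (hQ : Exchangeable Q)
    {T : 𝒳 → ℝ} (hT : Measurable T) (i : Fin n) (k : ℕ) :
    n * Q {v | numAtLeast (T ∘ v) i ≤ k} ≤ k := by
  have hperm : ∀ j, Q {v | numAtLeast (T ∘ v) j ≤ k} = Q {v | numAtLeast (T ∘ v) i ≤ k} := by
    intro j
    rw [← hQ.measure_preimage_comp_perm (Equiv.swap i j) (measurableSet_numAtLeast_le hT i k)]
    congr 1
    ext v
    simp [← Function.comp_assoc, numAtLeast_comp_perm]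
  calc (n : ℝ≥0∞) * Q {v | numAtLeast (T ∘ v) i ≤ k}
      = ∑ j, Q {v | numAtLeast (T ∘ v) j ≤ k} := by simp [hperm]
    _ ≤ k * Q Set.univ := sum_measure_le_of_card_mem_le Q
        (measurableSet_numAtLeast_le hT · k) fun v => by
          simpa only [Set.mem_ofPred_eq] using card_numAtLeast_le (T ∘ v) k
    _ = k := by simp

end Exchangeable

section Pval

variable {𝒳 : Type*} {M : ℕ} {T : 𝒳 → ℝ} {α : ℝ}

theorem pval_eq_numAtLeast (v : Fin (M + 1) → 𝒳) :
    pval T v = numAtLeast (T ∘ v) 0 / (M + 1) := by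
  simp only [pval, numAtLeast, card_filter, Fin.sum_univ_succ, Function.comp_apply, le_refl,
    if_true]
  push_cast
  ring

theorem pval_le_iff (hα : 0 ≤ α) (v : Fin (M + 1) → 𝒳) :
    pval T v ≤ α ↔ numAtLeast (T ∘ v) 0 ≤ ⌊α * (M + 1)⌋₊ := by
  rw [pval_eq_numAtLeast, div_le_iff₀ (by positivity), Nat.le_floor_iff (by positivity)]

theorem Exchangeable.measure_pval_le [MeasurableSpace 𝒳] {Q : Measure (Fin (M + 1) → 𝒳)}
    [IsProbabilityMeasure Q] (hQ : Exchangeable Q) (hT : Measurable T) (hα : 0 ≤ α) :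
    Q {v | pval T v ≤ α} ≤ ENNReal.ofReal α := by
  have hfloor : (⌊α * (M + 1)⌋₊ : ℝ≥0∞) ≤ (M + 1 : ℕ) * ENNReal.ofReal α :=
    calc (⌊α * (M + 1)⌋₊ : ℝ≥0∞) = ENNReal.ofReal ⌊α * (M + 1)⌋₊ := (ofReal_natCast _).symm
      _ ≤ ENNReal.ofReal (α * (M + 1 : ℕ)) := ofReal_le_ofReal <| by
          push_cast; exact Nat.floor_le (by positivity)
      _ = (M + 1 : ℕ) * ENNReal.ofReal α := by rw [ofReal_mul hα, ofReal_natCast, mul_comm]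
  have hbound := (hQ.mul_measure_numAtLeast_le hT 0 ⌊α * (M + 1)⌋₊).trans hfloor
  simp_rw [← pval_le_iff hα] at hbound
  exact (ENNReal.mul_le_mul_iff_right (by simp) (by simp)).mp hbound

theorem measurableSet_pval_le [MeasurableSpace 𝒳] (hT : Measurable T) (hα : 0 ≤ α) :
    MeasurableSet {v : Fin (M + 1) → 𝒳 | pval T v ≤ α} := by
  simpa only [pval_le_iff hα] using measurableSet_numAtLeast_le hT 0 ⌊α * (M + 1)⌋₊

end Pval

theorem pval_le_alpha_add_dExch_general
    {𝒳 : Type*} [MeasurableSpace 𝒳] {M : ℕ}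
    (P : Measure (Fin (M + 1) → 𝒳))
    (T : 𝒳 → ℝ) (hT : Measurable T) (α : ℝ) (hα0 : 0 ≤ α) :
    P {v | pval T v ≤ α} ≤ ENNReal.ofReal α + dExch P :=
  measure_le_add_dExch P (measurableSet_pval_le hT hα0) fun _ _ hQ => hQ.measure_pval_le hT hα0

/-- **p-value validity up to distance to exchangeability.** For random variables
`V_0, V_1, …, V_M` with joint law `P` on `𝒳^{M+1}`, any measurable statistic `T`, and any
`α ∈ [0,1]`, the p-value `(1 + #{m : T(V_m) ≥ T(V_0)})/(M+1)` satisfies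
`P(pval ≤ α) ≤ α + d_exch(V_0, …, V_M)`. -/
theorem pval_le_alpha_add_dExch
    {𝒳 : Type*} [MeasurableSpace 𝒳] {M : ℕ}
    (P : Measure (Fin (M + 1) → 𝒳)) [IsProbabilityMeasure P]
    (T : 𝒳 → ℝ) (hT : Measurable T) (α : ℝ) (hα0 : 0 ≤ α) (hα1 : α ≤ 1) :
    P {v | pval T v ≤ α} ≤ ENNReal.ofReal α + dExch P :=
  pval_le_alpha_add_dExch_general P T hT α hα0
end
end

section
/- Let V_0, V_1, …, V_M be random variables taking values in a common measurable space 𝒳 whose joint law is exchangeable, let T : 𝒳 → ℝ be any measurable function, and define pval = (1 + #{m ∈ {1, …, M} : T(V_m) ≥ T(V_0)})/(M + 1). Then for every α ∈ [0, 1], P(pval ≤ α) ≤ α. -/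
open MeasureTheory ProbabilityTheory ENNReal

open scoped Classical

noncomputable section

section Aux

variable {𝒳 : Type*} [MeasurableSpace 𝒳] {M : ℕ}

set_option linter.unusedSectionVars false

/-- Rank statistic: number of indices `j` with `T (v j) ≥ T (v i)` (including `j = i`). -/
def rankN (T : 𝒳 → ℝ) (i : Fin (M + 1)) (v : Fin (M + 1) → 𝒳) : ℕ :=
  (Finset.univ.filter fun j => T (v i) ≤ T (v j)).card

lemma rankN_measurable (T : 𝒳 → ℝ) (hT : Measurable T) (i : Fin (M + 1)) :
    Measurable fun v : Fin (M + 1) → 𝒳 => rankN T i v := by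
  have h : ∀ v : Fin (M + 1) → 𝒳,
      rankN T i v = ∑ j : Fin (M + 1), if T (v i) ≤ T (v j) then 1 else 0 := by
    intro v; rw [rankN, Finset.card_filter]
  simp only [h]
  apply Finset.measurable_sum
  intro j _
  exact Measurable.ite (measurableSet_le (hT.comp (measurable_pi_apply i))
    (hT.comp (measurable_pi_apply j))) measurable_const measurable_const

lemma rankN_comp (T : 𝒳 → ℝ) (σ : Equiv.Perm (Fin (M + 1))) (i : Fin (M + 1))
    (v : Fin (M + 1) → 𝒳) : rankN T i (v ∘ σ) = rankN T (σ i) v := by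
  unfold rankN
  apply Finset.card_bij' (fun j _ => σ j) (fun j _ => σ.symm j)
  · intro a ha
    simp only [Finset.mem_filter, Finset.mem_univ, true_and] at ha ⊢
    simpa using ha
  · intro a ha
    simp only [Finset.mem_filter, Finset.mem_univ, true_and] at ha ⊢
    simpa using ha
  · intro a _; simp
  · intro a _; simp

lemma rankN_count_le (T : 𝒳 → ℝ) (v : Fin (M + 1) → 𝒳) {c : ℝ} (hc : 0 ≤ c) :
    ((Finset.univ.filter fun i : Fin (M + 1) => (rankN T i v : ℝ) ≤ c).card : ℝ) ≤ c := by
  set S := Finset.univ.filter fun i : Fin (M + 1) => (rankN T i v : ℝ) ≤ c with hS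
  rcases S.eq_empty_or_nonempty with h | h
  · simp [h, hc]
  · obtain ⟨i₀, hi₀S, hi₀min⟩ := S.exists_min_image (fun i => T (v i)) h
    have hsub : S ⊆ Finset.univ.filter fun j => T (v i₀) ≤ T (v j) := by
      intro j hj
      simp only [Finset.mem_filter, Finset.mem_univ, true_and]
      exact hi₀min j hj
    have hcard : S.card ≤ rankN T i₀ v := Finset.card_le_card hsub
    have hle : (rankN T i₀ v : ℝ) ≤ c := by
      have := hi₀S; rw [hS] at this
      simpa using (Finset.mem_filter.mp this).2
    calc (S.card : ℝ) ≤ (rankN T i₀ v : ℝ) := by exact_mod_cast hcard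
      _ ≤ c := hle

lemma pval_eq_rankN (T : 𝒳 → ℝ) (v : Fin (M + 1) → 𝒳) :
    pval T v = (rankN T 0 v : ℝ) / (M + 1) := by
  have h : rankN T 0 v =
      1 + (Finset.univ.filter fun m : Fin M => T (v 0) ≤ T (v m.succ)).card := by
    rw [rankN, Finset.card_filter, Finset.card_filter, Fin.sum_univ_succ]
    simp
  rw [pval, h]
  push_cast
  ring_nf

end Aux

/-- **p-value validity under exchangeability.** If the joint law `P` of
`V_0, V_1, …, V_M` on `𝒳^{M+1}` is exchangeable, then for any measurable statistic `T` and any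
`α ∈ [0,1]`, the p-value `(1 + #{m : T(V_m) ≥ T(V_0)})/(M+1)` satisfies `P(pval ≤ α) ≤ α`. -/
theorem pval_le_alpha_of_exchangeable
    {𝒳 : Type*} [MeasurableSpace 𝒳] {M : ℕ}
    (P : Measure (Fin (M + 1) → 𝒳)) [IsProbabilityMeasure P]
    (hexch : Exchangeable P)
    (T : 𝒳 → ℝ) (hT : Measurable T) (α : ℝ) (hα0 : 0 ≤ α) (hα1 : α ≤ 1) :
    P {v | pval T v ≤ α} ≤ ENNReal.ofReal α := by
  set c : ℝ := α * ((M : ℝ) + 1) with hc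
  have hc0 : 0 ≤ c := by positivity
  set A : Fin (M + 1) → Set (Fin (M + 1) → 𝒳) :=
    fun i => {v | (rankN T i v : ℝ) ≤ c} with hA
  have hAmeas : ∀ i, MeasurableSet (A i) := by
    intro i
    have h : A i = (fun v => rankN T i v) ⁻¹' {n : ℕ | (n : ℝ) ≤ c} := rfl
    rw [h]
    exact (rankN_measurable T hT i) (MeasurableSet.of_discrete)
  -- the event {pval ≤ α} is A 0
  have hset : {v | pval T v ≤ α} = A 0 := by
    ext v
    simp only [Set.mem_setOf_eq, hA, pval_eq_rankN]
    rw [div_le_iff₀ (by positivity : (0:ℝ) < (M:ℝ) + 1), hc, mul_comm]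
  -- each A i has the same measure as A 0
  have hsame : ∀ i, P (A i) = P (A 0) := by
    intro i
    have hmap := hexch (Equiv.swap 0 i)
    have hfm : Measurable fun v : Fin (M + 1) → 𝒳 => v ∘ (Equiv.swap 0 i) :=
      measurable_pi_lambda _ fun j => measurable_pi_apply _
    have h : P (A 0) = P ((fun v => v ∘ (Equiv.swap 0 i)) ⁻¹' A 0) := by
      conv_lhs => rw [← hmap]
      rw [Measure.map_apply hfm (hAmeas 0)]
    rw [h]
    congr 1
    ext v
    simp only [Set.mem_preimage, hA, Set.mem_setOf_eq, rankN_comp, Equiv.swap_apply_left]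
  -- sum over i
  have hsum : ∑ i : Fin (M + 1), P (A i) = ((M : ℝ≥0∞) + 1) * P (A 0) := by
    simp [hsame, Finset.sum_const, mul_comm]
  have hsum2 : ∑ i : Fin (M + 1), P (A i) ≤ ENNReal.ofReal c := by
    have h1 : ∀ i, P (A i) = ∫⁻ v, (A i).indicator 1 v ∂P := fun i =>
      (lintegral_indicator_one (hAmeas i)).symm
    calc ∑ i : Fin (M + 1), P (A i)
        = ∫⁻ v, ∑ i : Fin (M + 1), (A i).indicator 1 v ∂P := by
          rw [lintegral_finset_sum]
          · simp [h1]
          · intro i _; exact (measurable_one.indicator (hAmeas i))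
      _ ≤ ∫⁻ _, ENNReal.ofReal c ∂P := by
          apply lintegral_mono
          intro v
          show ∑ i : Fin (M + 1), (A i).indicator 1 v ≤ ENNReal.ofReal c
          have h2 : ∑ i : Fin (M + 1), (A i).indicator 1 v
              = ((Finset.univ.filter fun i : Fin (M + 1) => v ∈ A i).card : ℝ≥0∞) := by
            rw [Finset.card_filter]
            push_cast
            apply Finset.sum_congr rfl
            intro i _
            by_cases h : v ∈ A i <;> simp [h, Set.indicator]
          rw [h2]
          have hcount := rankN_count_le T v hc0
          have h4 : (Finset.univ.filter fun i : Fin (M + 1) => v ∈ A i)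
              = Finset.univ.filter fun i : Fin (M + 1) => (rankN T i v : ℝ) ≤ c := rfl
          rw [h4, ← ENNReal.ofReal_natCast]
          exact ENNReal.ofReal_le_ofReal hcount
      _ = ENNReal.ofReal c := by simp
  rw [hset]
  have hkey : ((M : ℝ≥0∞) + 1) * P (A 0) ≤ ((M : ℝ≥0∞) + 1) * ENNReal.ofReal α := by
    rw [← hsum]
    calc ∑ i : Fin (M + 1), P (A i) ≤ ENNReal.ofReal c := hsum2
      _ = ((M : ℝ≥0∞) + 1) * ENNReal.ofReal α := by
          rw [hc, ENNReal.ofReal_mul hα0, mul_comm]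
          congr 1
          rw [ENNReal.ofReal_add (by positivity) zero_le_one]
          simp [ENNReal.ofReal_natCast]
  have hne0 : ((M : ℝ≥0∞) + 1) ≠ 0 := by simp
  have hnetop : ((M : ℝ≥0∞) + 1) ≠ ⊤ := by
    simp [ENNReal.add_ne_top]
  rwa [ENNReal.mul_le_mul_iff_right hne0 hnetop] at hkey

end
end

section
/- Consider the Bayesian joint model in which θ_0 ~ π, X | θ_0 ~ f_{θ_0}, and, conditionally on X, θ̂_1, …, θ̂_B are i.i.d. draws from the posterior π(· | X) (conditionally independent of θ_0 given X). Then, after marginalizing over θ_0, the conditional density of X given (θ̂_1, …, θ̂_B) = (θ_1, …, θ_B) with respect to ν_𝒳 is exactly g_π(x | θ_{1:B}) ∝ (∏_{b=1}^B f_{θ_b}(x)) / f̄_π(x)^{B−1}. -/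
open MeasureTheory ProbabilityTheory ENNReal

open scoped Classical

noncomputable section

variable {Θ 𝒳 : Type*} [MeasurableSpace Θ] [MeasurableSpace 𝒳]

/-- The marginal likelihood `f̄_π(x) = ∫ π(θ) f_θ(x) dν_Θ(θ)`. -/
def marg (νΘ : Measure Θ) (π : Θ → ℝ≥0∞) (f : Θ → 𝒳 → ℝ≥0∞) (x : 𝒳) : ℝ≥0∞ :=
  ∫⁻ θ, π θ * f θ x ∂νΘ

/-- The posterior density `π(θ | x) = π(θ) f_θ(x) / f̄_π(x)`. -/
def postDens (νΘ : Measure Θ) (π : Θ → ℝ≥0∞) (f : Θ → 𝒳 → ℝ≥0∞) (x : 𝒳) (θ : Θ) : ℝ≥0∞ :=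
  π θ * f θ x / marg νΘ π f x

/-- The posterior distribution of `θ` given `x`. -/
def postMeas (νΘ : Measure Θ) (π : Θ → ℝ≥0∞) (f : Θ → 𝒳 → ℝ≥0∞) (x : 𝒳) : Measure Θ :=
  νΘ.withDensity (postDens νΘ π f x)

/-- The unnormalized density of the copies: `(∏_b f_{θ_b}(x)) / f̄_π(x)^{B-1}`. -/
def gDensU (νΘ : Measure Θ) (π : Θ → ℝ≥0∞) (f : Θ → 𝒳 → ℝ≥0∞) {B : ℕ}
    (θs : Fin B → Θ) (x : 𝒳) : ℝ≥0∞ :=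
  (∏ b, f (θs b) x) / (marg νΘ π f x) ^ (B - 1)

/-- The normalizing constant of `gDensU`. -/
def gNorm (νΘ : Measure Θ) (ν𝒳 : Measure 𝒳) (π : Θ → ℝ≥0∞) (f : Θ → 𝒳 → ℝ≥0∞) {B : ℕ}
    (θs : Fin B → Θ) : ℝ≥0∞ :=
  ∫⁻ x, gDensU νΘ π f θs x ∂ν𝒳

/-- The probability distribution `g_π(· | θ_{1:B})` on `𝒳`. -/
def gMeas (νΘ : Measure Θ) (ν𝒳 : Measure 𝒳) (π : Θ → ℝ≥0∞) (f : Θ → 𝒳 → ℝ≥0∞) {B : ℕ}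
    (θs : Fin B → Θ) : Measure 𝒳 :=
  ν𝒳.withDensity fun x => gDensU νΘ π f θs x / gNorm νΘ ν𝒳 π f θs

/-- The prior concentration `ε(π₀) = d_TV(f_{θ₀}, f̄_{π₀})`. -/
def priorEps (νΘ : Measure Θ) (ν𝒳 : Measure 𝒳) (f : Θ → 𝒳 → ℝ≥0∞) (θ0 : Θ)
    (π0 : Θ → ℝ≥0∞) : ℝ≥0∞ :=
  tvDist (ν𝒳.withDensity (f θ0)) (ν𝒳.withDensity (marg νΘ π0 f))

/-- The posterior sensitivity `Δ(π₀) = E_{X ~ f_{θ₀}}[χ²(π₀(·|X) ‖ π(·|X))^{1/2}]`. -/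
def priorDelta (νΘ : Measure Θ) (ν𝒳 : Measure 𝒳) (π : Θ → ℝ≥0∞) (f : Θ → 𝒳 → ℝ≥0∞)
    (θ0 : Θ) (π0 : Θ → ℝ≥0∞) : ℝ≥0∞ :=
  ∫⁻ x, (chiSq (postMeas νΘ π0 f x) (postMeas νΘ π f x)) ^ (1 / 2 : ℝ)
    ∂(ν𝒳.withDensity (f θ0))

/-- The bound `inf_{π₀} { ε(π₀) + Δ(π₀) / (2√B) }`, the infimum over all prior densities `π₀`
on `Θ` whose marginal `f̄_{π₀}` is positive wherever some `f_θ` is positive. -/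
def acssBound (νΘ : Measure Θ) (ν𝒳 : Measure 𝒳) (π : Θ → ℝ≥0∞) (f : Θ → 𝒳 → ℝ≥0∞)
    (θ0 : Θ) (B : ℕ) : ℝ≥0∞ :=
  sInf { r : ℝ≥0∞ | ∃ π0 : Θ → ℝ≥0∞, Measurable π0 ∧
    IsProbabilityMeasure (νΘ.withDensity π0) ∧
    (∀ θ x, f θ x ≠ 0 → marg νΘ π0 f x ≠ 0) ∧
    r = priorEps νΘ ν𝒳 f θ0 π0
        + priorDelta νΘ ν𝒳 π f θ0 π0 / (2 * (B : ℝ≥0∞) ^ (1 / 2 : ℝ)) }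

/-!
Integrating out `θ₀` replaces `π(θ₀) f_{θ₀}(x)` by the marginal `f̄_π(x)`, and
`f̄_π(x) ∏_b π(θ_b | x) = (∏_b π(θ_b)) (∏_b f_{θ_b}(x)) / f̄_π(x)^{B-1}` as soon as `B ≥ 1` and
`f̄_π(x) < ∞`, which holds for almost every `x` since `f̄_π` integrates to `1`. Hence
`(θ̂_{1:B}, X)` has density `c(θ_{1:B}) g(θ_{1:B}, x)` with `c = ∏_b π(θ_b)` and `g` the
unnormalised density of `g_π`. Writing `c g = (c ∫ g) (g / ∫ g)` exhibits this law as the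
measure with density `c ∫ g` composed with the Markov kernel `g_π`, so that measure is the
marginal law of `θ̂_{1:B}`.
-/

namespace MeasureTheory.Measure

variable {α β : Type*} [MeasurableSpace α] [MeasurableSpace β]

lemma map_snd_prod_withDensity (μ : Measure α) (ν : Measure β) [SFinite μ] [SFinite ν]
    {D : α × β → ℝ≥0∞} (hD : Measurable D) :
    ((μ.prod ν).withDensity D).map Prod.snd = ν.withDensity fun y => ∫⁻ x, D (x, y) ∂μ := by
  ext s hs
  rw [map_apply measurable_snd hs, withDensity_apply _ (measurable_snd hs),
    withDensity_apply _ hs, ← Set.univ_prod, ← prod_restrict, restrict_univ,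
    lintegral_prod_symm _ hD.aemeasurable]

lemma map_swap_prod_withDensity (μ : Measure α) (ν : Measure β) [SFinite μ] [SFinite ν]
    {D : α × β → ℝ≥0∞} (hD : Measurable D) :
    ((μ.prod ν).withDensity D).map Prod.swap = (ν.prod μ).withDensity (D ∘ Prod.swap) := by
  ext s hs
  rw [map_apply measurable_swap hs, withDensity_apply _ (measurable_swap hs),
    withDensity_apply _ hs]
  exact measurePreserving_swap.setLIntegral_comp_preimage hs (hD.comp measurable_swap)

lemma withDensity_compProd_eq_prod_withDensity (μ : Measure α) (ν : Measure β)
    [SFinite μ] [SFinite ν] {c : α → ℝ≥0∞} {g : α → β → ℝ≥0∞} (hc : Measurable c)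
    (hg : Measurable (Function.uncurry g))
    (hg_norm : ∀ a, ∫⁻ x, g a x ∂ν ≠ 0 ∧ ∫⁻ x, g a x ∂ν ≠ ⊤)
    (K : Kernel α β) [IsSFiniteKernel K]
    (hK : ∀ a, K a = ν.withDensity fun x => g a x / ∫⁻ y, g a y ∂ν) :
    (μ.withDensity fun a => c a * ∫⁻ x, g a x ∂ν) ⊗ₘ K
      = (μ.prod ν).withDensity fun q => c q.1 * g q.1 q.2 := by
  have hN : Measurable fun a => ∫⁻ x, g a x ∂ν := hg.lintegral_prod_right'
  have hcN : Measurable fun a => c a * ∫⁻ x, g a x ∂ν := hc.mul hN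
  have hdens : Measurable (Function.uncurry fun a x => g a x / ∫⁻ y, g a y ∂ν) :=
    hg.div (hN.comp measurable_fst)
  have hK' : K = (Kernel.const α ν).withDensity fun a x => g a x / ∫⁻ y, g a y ∂ν := by
    ext1 a
    rw [hK, Kernel.withDensity_apply _ hdens, Kernel.const_apply]
  subst hK'
  rw [compProd_withDensity hdens, compProd_const, prod_withDensity_left hcN]
  refine (withDensity_mul _ (hcN.comp measurable_fst) hdens).symm.trans (congrArg _ ?_)
  funext q
  change c q.1 * _ * (g q.1 q.2 / _) = _
  rw [mul_assoc, ENNReal.mul_div_cancel (hg_norm q.1).1 (hg_norm q.1).2]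

end MeasureTheory.Measure

lemma marg_mul_prod_postDens {Θ 𝒳 : Type*} [MeasurableSpace Θ] {νΘ : Measure Θ}
    {π : Θ → ℝ≥0∞} {f : Θ → 𝒳 → ℝ≥0∞} {B : ℕ} (hB : 1 ≤ B) {x : 𝒳} (hx : marg νΘ π f x ≠ ⊤)
    (hsupp : ∀ θ, f θ x ≠ 0 → marg νΘ π f x ≠ 0) (θs : Fin B → Θ) :
    marg νΘ π f x * ∏ b, postDens νΘ π f x (θs b) = (∏ b, π (θs b)) * gDensU νΘ π f θs x := by
  obtain ⟨k, rfl⟩ : ∃ k, B = k + 1 := ⟨B - 1, by omega⟩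
  by_cases h0 : marg νΘ π f x = 0
  · have hf0 : f (θs 0) x = 0 := by_contra fun h => hsupp _ h h0
    rw [h0, zero_mul, gDensU,
      Finset.prod_eq_zero (f := fun b => f (θs b) x) (Finset.mem_univ 0) hf0, ENNReal.zero_div,
      mul_zero]
  · simp only [postDens, gDensU, div_eq_mul_inv, Finset.prod_mul_distrib, Finset.prod_const,
      Finset.card_univ, Fintype.card_fin, Nat.add_sub_cancel, pow_succ, ENNReal.inv_pow]
    calc _ = marg νΘ π f x * (marg νΘ π f x)⁻¹
            * ((∏ b, π (θs b)) * ((∏ b, f (θs b) x) * (marg νΘ π f x)⁻¹ ^ k)) := by ring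
      _ = _ := by rw [ENNReal.mul_inv_cancel h0 hx, one_mul]

section BayesModel

variable {νΘ : Measure Θ} {ν𝒳 : Measure 𝒳} {π : Θ → ℝ≥0∞} {f : Θ → 𝒳 → ℝ≥0∞}

lemma measurable_marg [SFinite νΘ] (hf : Measurable (Function.uncurry f)) (hπ : Measurable π) :
    Measurable (marg νΘ π f) :=
  Measurable.lintegral_prod_left' ((hπ.comp measurable_fst).mul hf)

lemma measurable_postDens [SFinite νΘ] (hf : Measurable (Function.uncurry f))
    (hπ : Measurable π) : Measurable (Function.uncurry (postDens νΘ π f)) :=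
  ((hπ.comp measurable_snd).mul (hf.comp measurable_swap)).div
    ((measurable_marg hf hπ).comp measurable_fst)

lemma measurable_gDensU [SFinite νΘ] (hf : Measurable (Function.uncurry f)) (hπ : Measurable π)
    {B : ℕ} : Measurable (Function.uncurry (gDensU (B := B) νΘ π f)) :=
  (Finset.measurable_prod _ fun b _ =>
      hf.comp (((measurable_pi_apply b).comp measurable_fst).prodMk measurable_snd)).div
    (((measurable_marg hf hπ).comp measurable_snd).pow_const _)

lemma lintegral_marg [SFinite νΘ] [SFinite ν𝒳] (hf : Measurable (Function.uncurry f))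
    (hπ : Measurable π) (hf_one : ∀ θ, ∫⁻ x, f θ x ∂ν𝒳 = 1) :
    ∫⁻ x, marg νΘ π f x ∂ν𝒳 = ∫⁻ θ, π θ ∂νΘ := by
  unfold marg
  rw [lintegral_lintegral_swap
    ((hπ.comp measurable_snd).mul (hf.comp measurable_swap)).aemeasurable]
  simp_rw [lintegral_const_mul _ hf.of_uncurry_left, hf_one, mul_one]

lemma ae_marg_lt_top [SigmaFinite νΘ] [SigmaFinite ν𝒳] (hf : Measurable (Function.uncurry f))
    (hπ : Measurable π) (hfprob : ∀ θ, IsProbabilityMeasure (ν𝒳.withDensity (f θ)))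
    (hπprob : IsProbabilityMeasure (νΘ.withDensity π)) :
    ∀ᵐ x ∂ν𝒳, marg νΘ π f x < ⊤ := by
  have hf_one θ : ∫⁻ x, f θ x ∂ν𝒳 = 1 := by
    simpa only [withDensity_apply _ MeasurableSet.univ, Measure.restrict_univ]
      using (hfprob θ).measure_univ
  have hπ_one : ∫⁻ θ, π θ ∂νΘ = 1 := by
    simpa only [withDensity_apply _ MeasurableSet.univ, Measure.restrict_univ]
      using hπprob.measure_univ
  refine ae_lt_top (measurable_marg hf hπ) ?_
  rw [lintegral_marg hf hπ hf_one, hπ_one]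
  exact ENNReal.one_ne_top

lemma map_snd_withDensity_prior_likelihood_posteriors {B : ℕ} (hB : 1 ≤ B)
    (μ : Measure (Fin B → Θ)) [SigmaFinite νΘ] [SigmaFinite ν𝒳] [SFinite μ]
    (hf : Measurable (Function.uncurry f)) (hπ : Measurable π)
    (hfprob : ∀ θ, IsProbabilityMeasure (ν𝒳.withDensity (f θ)))
    (hπprob : IsProbabilityMeasure (νΘ.withDensity π))
    (hsupp : ∀ θ x, f θ x ≠ 0 → marg νΘ π f x ≠ 0) :
    ((νΘ.prod (ν𝒳.prod μ)).withDensity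
        fun p => π p.1 * f p.1 p.2.1 * ∏ b, postDens νΘ π f p.2.1 (p.2.2 b)).map Prod.snd
      = (ν𝒳.prod μ).withDensity fun y => (∏ b, π (y.2 b)) * gDensU νΘ π f y.2 y.1 := by
  have := measurable_postDens (νΘ := νΘ) hf hπ
  rw [Measure.map_snd_prod_withDensity _ _ (by fun_prop)]
  refine withDensity_congr_ae ?_
  filter_upwards [Measure.quasiMeasurePreserving_fst.ae (ae_marg_lt_top hf hπ hfprob hπprob)]
    with y hy
  rw [lintegral_mul_const _ (f := fun θ => π θ * f θ y.1) (hπ.mul hf.of_uncurry_right)]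
  exact marg_mul_prod_postDens hB hy.ne (hsupp · y.1) y.2

end BayesModel

theorem bayes_conditional_of_X_given_posterior_draws_general
    {Θ 𝒳 : Type*} [MeasurableSpace Θ] [MeasurableSpace 𝒳]
    (νΘ : Measure Θ) (ν𝒳 : Measure 𝒳) [SigmaFinite νΘ] [SigmaFinite ν𝒳]
    (f : Θ → 𝒳 → ℝ≥0∞) (hf : Measurable (Function.uncurry f))
    (hfprob : ∀ θ, IsProbabilityMeasure (ν𝒳.withDensity (f θ)))
    (π : Θ → ℝ≥0∞) (hπ : Measurable π)
    (hπprob : IsProbabilityMeasure (νΘ.withDensity π))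
    (hsupp : ∀ θ x, f θ x ≠ 0 → marg νΘ π f x ≠ 0)
    (B : ℕ) (hB : 1 ≤ B)
    (hnorm : ∀ θs : Fin B → Θ,
      0 < gNorm νΘ ν𝒳 π f θs ∧ gNorm νΘ ν𝒳 π f θs < ⊤)
    (K : Kernel (Fin B → Θ) 𝒳) [IsMarkovKernel K]
    (hK : ∀ θs : Fin B → Θ, K θs = gMeas νΘ ν𝒳 π f θs) :
    Measure.map Prod.swap
        (Measure.map (fun p : Θ × 𝒳 × (Fin B → Θ) => p.2)
          ((νΘ.prod (ν𝒳.prod (Measure.pi fun _ : Fin B => νΘ))).withDensity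
            fun p => π p.1 * f p.1 p.2.1 * ∏ b, postDens νΘ π f p.2.1 (p.2.2 b)))
      = Measure.compProd
          (Measure.map (fun p : Θ × 𝒳 × (Fin B → Θ) => p.2.2)
            ((νΘ.prod (ν𝒳.prod (Measure.pi fun _ : Fin B => νΘ))).withDensity
              fun p => π p.1 * f p.1 p.2.1 * ∏ b, postDens νΘ π f p.2.1 (p.2.2 b)))
          K := by
  set joint := (νΘ.prod (ν𝒳.prod (Measure.pi fun _ : Fin B => νΘ))).withDensity
    fun p => π p.1 * f p.1 p.2.1 * ∏ b, postDens νΘ π f p.2.1 (p.2.2 b)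
  have hG := measurable_gDensU (νΘ := νΘ) hf hπ (B := B)
  have hdraws_data : (joint.map Prod.snd).map Prod.swap
      = ((Measure.pi fun _ : Fin B => νΘ).prod ν𝒳).withDensity
          fun q => (∏ b, π (q.1 b)) * gDensU νΘ π f q.1 q.2 := by
    rw [map_snd_withDensity_prior_likelihood_posteriors hB _ hf hπ hfprob hπprob hsupp,
      Measure.map_swap_prod_withDensity _ _ (by fun_prop)]
    rfl
  have hdisintegrate : (joint.map Prod.snd).map Prod.swap
      = ((Measure.pi fun _ : Fin B => νΘ).withDensity
          fun θs => (∏ b, π (θs b)) * gNorm νΘ ν𝒳 π f θs) ⊗ₘ K := by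
    rw [hdraws_data]
    have hc : Measurable fun θs : Fin B → Θ => ∏ b, π (θs b) := by fun_prop
    exact (Measure.withDensity_compProd_eq_prod_withDensity _ _ hc hG
      (fun θs => ⟨(hnorm θs).1.ne', (hnorm θs).2.ne⟩) K hK).symm
  have hdraws : joint.map (fun p => p.2.2) = ((joint.map Prod.snd).map Prod.swap).fst := by
    rw [Measure.fst, Measure.map_map measurable_fst measurable_swap,
      Measure.map_map (measurable_fst.comp measurable_swap) measurable_snd]
    rfl
  rw [hdraws, hdisintegrate, Measure.fst_compProd]

/-- **Conditional distribution of `X` given the posterior draws in the Bayesian model.** In the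
Bayesian joint model `θ₀ ~ π`, `X | θ₀ ~ f_{θ₀}`, and `θ̂_1, …, θ̂_B | X` i.i.d. from the
posterior `π(· | X)` (conditionally independent of `θ₀` given `X`), after marginalizing over
`θ₀` the conditional distribution of `X` given `θ̂_{1:B} = θ_{1:B}` is exactly
`g_π(· | θ_{1:B})`: for any Markov kernel `K` with `K θ_{1:B} = g_π(· | θ_{1:B})` for all
`θ_{1:B}`, the (swapped) joint law of `(θ̂_{1:B}, X)` equals the composition of the marginal law
of `θ̂_{1:B}` with `K`. -/
theorem bayes_conditional_of_X_given_posterior_draws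
    {Θ 𝒳 : Type*} [MeasurableSpace Θ] [MeasurableSpace 𝒳]
    (νΘ : Measure Θ) (ν𝒳 : Measure 𝒳) [SigmaFinite νΘ] [SigmaFinite ν𝒳]
    (f : Θ → 𝒳 → ℝ≥0∞) (hf : Measurable (Function.uncurry f))
    (hfprob : ∀ θ, IsProbabilityMeasure (ν𝒳.withDensity (f θ)))
    (π : Θ → ℝ≥0∞) (hπ : Measurable π) (hπpos : ∀ θ, 0 < π θ)
    (hπprob : IsProbabilityMeasure (νΘ.withDensity π))
    (hsupp : ∀ θ x, f θ x ≠ 0 → marg νΘ π f x ≠ 0)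
    (B : ℕ) (hB : 1 ≤ B)
    (hnorm : ∀ θs : Fin B → Θ,
      0 < gNorm νΘ ν𝒳 π f θs ∧ gNorm νΘ ν𝒳 π f θs < ⊤)
    (K : Kernel (Fin B → Θ) 𝒳) [IsMarkovKernel K]
    (hK : ∀ θs : Fin B → Θ, K θs = gMeas νΘ ν𝒳 π f θs) :
    Measure.map Prod.swap
        (Measure.map (fun p : Θ × 𝒳 × (Fin B → Θ) => p.2)
          ((νΘ.prod (ν𝒳.prod (Measure.pi fun _ : Fin B => νΘ))).withDensity
            fun p => π p.1 * f p.1 p.2.1 * ∏ b, postDens νΘ π f p.2.1 (p.2.2 b)))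
      = Measure.compProd
          (Measure.map (fun p : Θ × 𝒳 × (Fin B → Θ) => p.2.2)
            ((νΘ.prod (ν𝒳.prod (Measure.pi fun _ : Fin B => νΘ))).withDensity
              fun p => π p.1 * f p.1 p.2.1 * ∏ b, postDens νΘ π f p.2.1 (p.2.2 b)))
          K :=
  bayes_conditional_of_X_given_posterior_draws_general νΘ ν𝒳 f hf hfprob π hπ hπprob hsupp B hB
    hnorm K hK
end
end
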